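/- Let m ≥ 9. Suppose a₁ ≤ a₂ ≤ ⋯ ≤ aₙ are positive integers with (a₁,a₂) = (1,2) and a₁ + ⋯ + aₙ = m - 4, and suppose the form Σ a_kP_m(x_k) represents every positive integer up to m-4. Then it does not represent m-2. -/
import Mathlib


/-- The generalized `m`-gonal number `P_m(x) = ((m-2)x² - (m-4)x)/2`. -/
def polygonal (m x : ℤ) : ℤ := ((m - 2) * x ^ 2 - (m - 4) * x) / 2

lemma two_mul_polygonal (m x : ℤ) :
    2 * polygonal m x = (m - 2) * x ^ 2 - (m - 4) * x := by
  have h : (2:ℤ) ∣ (m - 2) * x ^ 2 - (m - 4) * x := by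
    obtain ⟨c, hc⟩ := Int.even_mul_succ_self x
    exact ⟨(m - 2) * c - (m - 3) * x, by linear_combination (m - 2) * hc⟩
  exact Int.mul_ediv_cancel' h

lemma polygonal_nonneg (m x : ℤ) (hm : 9 ≤ m) : 0 ≤ polygonal m x := by
  have h := two_mul_polygonal m x
  rcases le_or_gt x 0 with hx | hx
  · nlinarith [sq_nonneg x]
  · nlinarith [sq_nonneg x, mul_le_mul_of_nonneg_left (show x ≤ x ^ 2 by nlinarith) (show (0:ℤ) ≤ m - 4 by omega)]

lemma polygonal_cases (m x : ℤ) (hm : 9 ≤ m) (hle : polygonal m x ≤ m - 2) :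
    polygonal m x = 0 ∨ polygonal m x = 1 ∨ polygonal m x = m - 3 := by
  have h := two_mul_polygonal m x
  have hx1 : -1 ≤ x := by
    by_contra hc
    push_neg at hc
    have hx : x ≤ -2 := by omega
    nlinarith [mul_le_mul_of_nonpos_left (show (m-2) * x - (m-4) ≤ -2*(m-2) - (m-4) by nlinarith) (show x ≤ 0 by omega)]
  have hx2 : x ≤ 2 := by
    by_contra hc
    push_neg at hc
    have hx : 3 ≤ x := by omega
    nlinarith [mul_le_mul_of_nonneg_left (show 3*(m-2) - (m-4) ≤ (m-2) * x - (m-4) by nlinarith) (show (0:ℤ) ≤ x by omega)]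
  interval_cases x <;> omega

theorem one_two_fails (m : ℤ) (hm : 9 ≤ m) (n : ℕ) (hn : 2 ≤ n)
    (a : Fin n → ℤ) (hpos : ∀ k, 0 < a k) (hmono : Monotone a)
    (ha1 : a ⟨0, by omega⟩ = 1) (ha2 : a ⟨1, by omega⟩ = 2)
    (hsum : ∑ k, a k = m - 4)
    (hrep : ∀ r : ℤ, 1 ≤ r → r ≤ m - 4 →
      ∃ x : Fin n → ℤ, ∑ k, a k * polygonal m (x k) = r) :
    ¬ ∃ x : Fin n → ℤ, ∑ k, a k * polygonal m (x k) = m - 2 := by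
  rintro ⟨x, hx⟩
  set t : Fin n → ℤ := fun k => a k * polygonal m (x k) with ht
  have htnn : ∀ k, 0 ≤ t k := fun k =>
    mul_nonneg (hpos k).le (polygonal_nonneg m (x k) hm)
  have hx' : ∑ k, t k = m - 2 := hx
  have htle : ∀ k, t k ≤ m - 2 := by
    intro k
    calc t k ≤ ∑ j, t j := Finset.single_le_sum (fun j _ => htnn j) (Finset.mem_univ k)
    _ = m - 2 := hx'
  have hple : ∀ k, polygonal m (x k) ≤ m - 2 := by
    intro k
    have h1 : 1 ≤ a k := hpos k
    have h2 : a k * polygonal m (x k) ≤ m - 2 := htle k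
    nlinarith [polygonal_nonneg m (x k) hm]
  have hpc : ∀ k, polygonal m (x k) = 0 ∨ polygonal m (x k) = 1 ∨
      polygonal m (x k) = m - 3 := fun k => polygonal_cases m (x k) hm (hple k)
  have hage : ∀ k : Fin n, (1:ℕ) ≤ k.val → 2 ≤ a k := by
    intro k hk
    have : a ⟨1, by omega⟩ ≤ a k := hmono (by simp [Fin.le_def]; omega)
    omega
  by_cases hbig : ∃ k, polygonal m (x k) = m - 3
  · obtain ⟨k₀, hk₀⟩ := hbig
    -- a k₀ = 1, so k₀ = 0
    have hak₀ : a k₀ = 1 := by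
      have h1 := htle k₀
      have h2 := hpos k₀
      rw [ht] at h1
      simp only at h1
      rw [hk₀] at h1
      nlinarith
    have hk₀0 : k₀ = ⟨0, by omega⟩ := by
      by_contra hne
      have : 1 ≤ k₀.val := by
        rcases Nat.eq_zero_or_pos k₀.val with h | h
        · exact absurd (Fin.ext h) hne
        · omega
      have := hage k₀ this
      omega
    have hrest : ∑ k ∈ Finset.univ.erase k₀, t k = 1 := by
      have hsplit : t k₀ + ∑ k ∈ Finset.univ.erase k₀, t k = ∑ k, t k :=
        Finset.add_sum_erase Finset.univ t (Finset.mem_univ k₀)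
      have htk₀ : t k₀ = m - 3 := by rw [ht]; simp only; rw [hk₀, hak₀]; ring
      rw [hx'] at hsplit
      omega
    have hzero : ∀ k ∈ Finset.univ.erase k₀, t k = 0 := by
      intro k hk
      have hle1 : t k ≤ 1 := by
        calc t k ≤ ∑ j ∈ Finset.univ.erase k₀, t j :=
          Finset.single_le_sum (fun j _ => htnn j) hk
        _ = 1 := hrest
      have hne : k ≠ k₀ := (Finset.mem_erase.mp hk).1
      have hk1 : 1 ≤ k.val := by
        rcases Nat.eq_zero_or_pos k.val with h | h
        · exact absurd (by rw [hk₀0]; exact Fin.ext h) hne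
        · omega
      have ha2k := hage k hk1
      rcases hpc k with h | h | h
      · rw [ht]; simp only; rw [h]; ring
      · exfalso; rw [ht] at hle1; simp only at hle1; rw [h] at hle1; omega
      · exfalso
        rw [ht] at hle1; simp only at hle1; rw [h] at hle1
        nlinarith
    rw [Finset.sum_eq_zero hzero] at hrest
    omega
  · push_neg at hbig
    have hsle : ∑ k, t k ≤ ∑ k, a k := by
      apply Finset.sum_le_sum
      intro k _
      have h1 := hpos k
      rcases hpc k with h | h | h
      · rw [ht]; simp only; rw [h]; omega
      · rw [ht]; simp only; rw [h]; omega
      · exact absurd h (hbig k)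
    rw [hx', hsum] at hsle
    omega
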